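/- Let F be a homogeneous foliation of degree 3 on ℂ² induced by a homogeneous vector field X = A∂_x + B∂_y (A, B homogeneous of degree 3) whose inflection divisor I(F) is reduced. Then the tangent cone divisor {yA − xB = 0} is reduced, i.e., yA − xB has no repeated linear factor. -/

import Mathlib

/-!
Write `T = yA - xB` and `D = A ∂x + B ∂y`. With no `∂z` component the inflection determinant
is `z (A · D B - B · D A)`, and Euler's relations `x ∂x A + y ∂y A = 3A`, `x ∂x B + y ∂y B = 3B`
give `3 (A · D B - B · D A) = -T · (∂x A ∂y B - ∂y A ∂x B)`. So `T` divides the inflection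
polynomial, and a divisor of a squarefree polynomial is squarefree.
-/

open MvPolynomial

/-- Action of the homogeneous vector field `X = A∂x + B∂y + C∂z` on a polynomial. -/
noncomputable def applyVF (A B C f : MvPolynomial (Fin 3) ℂ) : MvPolynomial (Fin 3) ℂ :=
  A * pderiv 0 f + B * pderiv 1 f + C * pderiv 2 f

/-- The defining polynomial of the inflection divisor of the foliation given by the homogeneous
vector field `X = A∂x + B∂y + C∂z`. -/
noncomputable def inflDet (A B C : MvPolynomial (Fin 3) ℂ) : MvPolynomial (Fin 3) ℂ :=
  Matrix.det !![X 0, X 1, X 2; A, B, C;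
    applyVF A B C A, applyVF A B C B, applyVF A B C C]

theorem Squarefree.of_map_of_leftInverse {M N F G : Type*} [Monoid M] [Monoid N]
    [FunLike F M N] [MonoidHomClass F M N] [FunLike G N M] [MonoidHomClass G N M]
    {f : F} {g : G} (hgf : Function.LeftInverse g f) {x : M} (hx : Squarefree (f x)) :
    Squarefree x := fun u hu => by
  simpa [hgf u] using (hx (f u) (by simpa only [map_mul] using map_dvd f hu)).map g

theorem MvPolynomial.squarefree_of_squarefree_rename {R σ τ : Type*} [CommSemiring R]
    {f : σ → τ} (hf : Function.Injective f)
    {p : MvPolynomial σ R} (hp : Squarefree (rename f p)) : Squarefree p :=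
  hp.of_map_of_leftInverse (g := killCompl hf) (killCompl_rename_app hf)

section PlanarField

variable {R : Type*} [CommRing R]

noncomputable def applyVF₂ (A B f : MvPolynomial (Fin 2) R) : MvPolynomial (Fin 2) R :=
  A * pderiv 0 f + B * pderiv 1 f

theorem natCast_mul_sub_applyVF₂ {n : ℕ} {A B : MvPolynomial (Fin 2) R}
    (hA : A.IsHomogeneous n) (hB : B.IsHomogeneous n) :
    (n : MvPolynomial (Fin 2) R) * (A * applyVF₂ A B B - B * applyVF₂ A B A) =
      -((X 1 * A - X 0 * B) * (pderiv 0 A * pderiv 1 B - pderiv 1 A * pderiv 0 B)) := by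
  have eulerA := hA.sum_X_mul_pderiv
  have eulerB := hB.sum_X_mul_pderiv
  simp only [Fin.sum_univ_two, nsmul_eq_mul] at eulerA eulerB
  rw [applyVF₂, applyVF₂]
  linear_combination (A * pderiv 0 A + B * pderiv 1 A) * eulerB -
    (A * pderiv 0 B + B * pderiv 1 B) * eulerA

theorem X_one_mul_sub_dvd_mul_applyVF₂_sub {n : ℕ} (hn : IsUnit (n : R))
    {A B : MvPolynomial (Fin 2) R} (hA : A.IsHomogeneous n) (hB : B.IsHomogeneous n) :
    X 1 * A - X 0 * B ∣ A * applyVF₂ A B B - B * applyVF₂ A B A := by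
  have hn' : IsUnit (n : MvPolynomial (Fin 2) R) := by simpa using hn.map (C : R →+* _)
  rw [← hn'.dvd_mul_left, natCast_mul_sub_applyVF₂ hA hB, dvd_neg]
  exact dvd_mul_right _ _

end PlanarField

theorem applyVF_rename_castSucc (A B f : MvPolynomial (Fin 2) ℂ) :
    applyVF (rename Fin.castSucc A) (rename Fin.castSucc B) 0 (rename Fin.castSucc f) =
      rename Fin.castSucc (applyVF₂ A B f) := by
  have h0 := pderiv_rename (Fin.castSucc_injective 2) 0 f
  have h1 := pderiv_rename (Fin.castSucc_injective 2) 1 f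
  simp only [Fin.castSucc_zero, Fin.castSucc_one] at h0 h1
  simp [applyVF, applyVF₂, h0, h1]

theorem inflDet_rename_castSucc (A B : MvPolynomial (Fin 2) ℂ) :
    inflDet (rename Fin.castSucc A) (rename Fin.castSucc B) 0 =
      X 2 * rename Fin.castSucc (A * applyVF₂ A B B - B * applyVF₂ A B A) := by
  rw [inflDet, applyVF_rename_castSucc, applyVF_rename_castSucc, Matrix.det_fin_three]
  simp only [applyVF, map_zero, mul_zero, add_zero, Matrix.of_apply, Matrix.cons_val',
    Matrix.cons_val_zero, Matrix.cons_val_fin_one, Matrix.cons_val_one, Matrix.cons_val, zero_mul,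
    sub_self, zero_add, map_sub, map_mul]
  ring

/-- Let `F` be a homogeneous foliation of degree `3` on `ℂ²` induced by the
vector field `X = A∂x + B∂y` with `A, B` homogeneous cubics (viewed on `ℙ²` via the homogeneous
vector field `A(x,y)∂x + B(x,y)∂y` on `ℂ³`), and suppose the inflection divisor `I(F)` is
reduced, i.e. its defining polynomial is squarefree.  Then the tangent cone divisor
`{yA - xB = 0}` is reduced: `yA - xB` has no repeated (linear) factor. -/
theorem stmt16 (A B : MvPolynomial (Fin 2) ℂ)
    (hA : A.IsHomogeneous 3) (hB : B.IsHomogeneous 3)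
    (hred : Squarefree (inflDet (rename Fin.castSucc A) (rename Fin.castSucc B) 0)) :
    Squarefree ((X 1 : MvPolynomial (Fin 2) ℂ) * A - X 0 * B) := by
  have hT : rename Fin.castSucc (X 1 * A - X 0 * B) ∣
      inflDet (rename Fin.castSucc A) (rename Fin.castSucc B) 0 := by
    rw [inflDet_rename_castSucc]
    exact dvd_mul_of_dvd_right (map_dvd _ (X_one_mul_sub_dvd_mul_applyVF₂_sub
      (by norm_num) hA hB)) _
  exact squarefree_of_squarefree_rename (Fin.castSucc_injective 2) (hred.squarefree_of_dvd hT)
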